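/- arXiv:1903.04225 — 4 statements merged into one kernel-verified Lean document; each statement's English description precedes it below -/
import Mathlib

section
/- If ζ : ℝ → [0,∞) is continuous and ∫₀^∞ t^{n-1} ζ(t) dt = ∞, then there exists a convex, super-coercive function u : ℝⁿ → ℝ such that ∫_{ℝⁿ} ζ(u(x)) dx = ∞. -/
/-!
Choose `0 = b₀ < b₁ < ⋯` with `∫_{b_k}^{b_{k+1}} t^{n-1} ζ(t) dt ≥ (k+1)^n`, and let `f` be the
convex piecewise linear function with `f(0) = 0` and slope `k + 1` on the piece
`[A_k, A_{k+1}] = f⁻¹[b_k, b_{k+1}]`; then `u = f ∘ ‖·‖` is convex and super-coercive. The line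
`t = (k+1) r + c` extending the `k`-th piece has `c ≤ 0`, so substituting `t = f(r)` there gives
`t^{n-1} dt ≤ (k+1)^n r^{n-1} dr`: every piece contributes at least `1` to
`∫_0^∞ r^{n-1} ζ(f(r)) dr`, which is `∫ ζ ∘ u` in polar coordinates up to a positive factor.
-/

open MeasureTheory Filter Set Topology
open scoped ENNReal

theorem convexOn_ciSup {ι E : Type*} [Nonempty ι] [AddCommMonoid E] [Module ℝ E] {s : Set E}
    {f : ι → E → ℝ} (hf : ∀ i, ConvexOn ℝ s (f i))
    (hbdd : ∀ x ∈ s, BddAbove (range fun i => f i x)) :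
    ConvexOn ℝ s fun x => ⨆ i, f i x := by
  refine ⟨(hf (Classical.arbitrary ι)).1, fun x hx y hy a b ha hb hab => ciSup_le fun i => ?_⟩
  calc f i (a • x + b • y) ≤ a • f i x + b • f i y := (hf i).2 hx hy ha hb hab
    _ ≤ a • (⨆ i, f i x) + b • ⨆ i, f i y := by
      gcongr
      exacts [le_ciSup (hbdd x hx) i, le_ciSup (hbdd y hy) i]

theorem lintegral_comp_norm_eq_top_iff {E : Type*} [NormedAddCommGroup E] [NormedSpace ℝ E]
    [Nontrivial E] [FiniteDimensional ℝ E] [MeasurableSpace E] [BorelSpace E] (μ : Measure E)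
    [μ.IsAddHaarMeasure] {g : ℝ → ℝ} (hg : Measurable g) (hg0 : ∀ r, 0 ≤ g r) :
    ∫⁻ x, ENNReal.ofReal (g ‖x‖) ∂μ = ∞ ↔
      ∫⁻ r in Ioi 0, ENNReal.ofReal (r ^ (Module.finrank ℝ E - 1) * g r) = ∞ := by
  rw [← not_iff_not, ← Ne, ← Ne,
    lintegral_ofReal_ne_top_iff_integrable
      (show Measurable fun x : E => g ‖x‖ from hg.comp measurable_norm).aestronglyMeasurable
      (ae_of_all _ fun x => hg0 _),
    lintegral_ofReal_ne_top_iff_integrable (by fun_prop)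
      (ae_restrict_of_forall_mem measurableSet_Ioi fun r hr =>
        mul_nonneg (pow_nonneg (le_of_lt hr) _) (hg0 r)),
    integrable_fun_norm_addHaar]
  simp only [smul_eq_mul, IntegrableOn]

theorem tendsto_setLIntegral_Ioo_atTop {f : ℝ → ℝ} (hf : Continuous f)
    (htop : ∫⁻ t in Ioi 0, ENNReal.ofReal (f t) = ∞) (a : ℝ) :
    Tendsto (fun c => ∫⁻ t in Ioo a c, ENNReal.ofReal (f t)) atTop (𝓝 ∞) := by
  have hIoi : ∫⁻ t in Ioi a, ENNReal.ofReal (f t) = ∞ := by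
    by_contra hne
    have hsplit : ∫⁻ t in Ioi 0, ENNReal.ofReal (f t)
        ≤ (∫⁻ t in Ioc 0 a, ENNReal.ofReal (f t)) + ∫⁻ t in Ioi a, ENNReal.ofReal (f t) := by
      refine (lintegral_mono_set fun t ht => ?_).trans (lintegral_union_le _ _ _)
      exact (le_or_gt t a).imp (fun hta => ⟨ht, hta⟩) id
    rw [htop, top_le_iff] at hsplit
    exact ENNReal.add_ne_top.2 ⟨hf.integrableOn_Ioc.lintegral_lt_top.ne, hne⟩ hsplit
  have hunion := tendsto_measure_iUnion_atTop
    (μ := volume.withDensity fun t => ENNReal.ofReal (f t)) (s := fun c => Ioo a c)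
    fun _ _ hcc' => Ioo_subset_Ioo_right hcc'
  rw [iUnion_Ioo_right, withDensity_apply _ measurableSet_Ioi, hIoi] at hunion
  exact hunion.congr fun c => withDensity_apply _ measurableSet_Ioo

theorem setLIntegral_Ioo_affine_le {ζ : ℝ → ℝ} (hζ : ∀ t, 0 ≤ ζ t) (m : ℕ) {s c α β : ℝ}
    (hs : 0 < s) (hc : c ≤ 0) (hα : 0 ≤ s * α + c) :
    ∫⁻ t in Ioo (s * α + c) (s * β + c), ENNReal.ofReal (t ^ m * ζ t)
      ≤ ENNReal.ofReal (s ^ (m + 1)) * ∫⁻ r in Ioo α β, ENNReal.ofReal (r ^ m * ζ (s * r + c)) := by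
  have hderiv (r : ℝ) : HasDerivAt (fun r => s * r + c) s r := by
    simpa using ((hasDerivAt_id r).const_mul s).add_const c
  rw [← image_affine_Ioo hs, lintegral_image_eq_lintegral_abs_deriv_mul measurableSet_Ioo
      (fun r _ => (hderiv r).hasDerivWithinAt) fun x _ y _ h => by simpa [hs.ne'] using h,
    ← lintegral_const_mul' _ _ ENNReal.ofReal_ne_top]
  refine setLIntegral_mono' measurableSet_Ioo fun r hr => ?_
  have hpow : (s * r + c) ^ m ≤ (s * r) ^ m :=
    pow_le_pow_left₀ (hα.trans (by nlinarith [hr.1])) (by linarith) m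
  rw [abs_of_pos hs, ← ENNReal.ofReal_mul hs.le, ← ENNReal.ofReal_mul (by positivity)]
  refine ENNReal.ofReal_le_ofReal ?_
  calc s * ((s * r + c) ^ m * ζ (s * r + c)) ≤ s * ((s * r) ^ m * ζ (s * r + c)) := by
        gcongr; exact hζ _
    _ = s ^ (m + 1) * (r ^ m * ζ (s * r + c)) := by ring

/-- `(A k, b k)` are the corners of a convex piecewise linear function through the origin, with
slope `k + 1` between the `k`-th and the `(k+1)`-st corner. -/
structure ConvexCorners (A b : ℕ → ℝ) : Prop where
  A_zero : A 0 = 0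
  b_zero : b 0 = 0
  A_add_one_le : ∀ k, A k + 1 ≤ A (k + 1)
  b_succ_sub : ∀ k, b (k + 1) - b k = (k + 1) * (A (k + 1) - A k)

def supportLine (A b : ℕ → ℝ) (k : ℕ) (r : ℝ) : ℝ := b k + (k + 1) * (r - A k)

noncomputable def cornerFunction (A b : ℕ → ℝ) (r : ℝ) : ℝ := ⨆ k, supportLine A b k r

theorem supportLine_eq_add (A b : ℕ → ℝ) (k : ℕ) (r : ℝ) :
    supportLine A b k r = (k + 1) * r + supportLine A b k 0 := by
  unfold supportLine; ring

theorem measurable_cornerFunction (A b : ℕ → ℝ) : Measurable (cornerFunction A b) :=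
  Measurable.iSup fun k => by unfold supportLine; fun_prop

namespace ConvexCorners

variable {A b : ℕ → ℝ}

theorem monotone (h : ConvexCorners A b) : Monotone A :=
  monotone_nat_of_le_succ fun k => by linarith [h.A_add_one_le k]

theorem natCast_le (h : ConvexCorners A b) (k : ℕ) : (k : ℝ) ≤ A k := by
  induction k with
  | zero => simp [h.A_zero]
  | succ k ih => push_cast; linarith [h.A_add_one_le k]

theorem b_nonneg (h : ConvexCorners A b) (k : ℕ) : 0 ≤ b k := by
  induction k with
  | zero => simp [h.b_zero]
  | succ k ih => nlinarith [h.b_succ_sub k, h.A_add_one_le k]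

theorem supportLine_succ (h : ConvexCorners A b) (k : ℕ) (r : ℝ) :
    supportLine A b (k + 1) r = supportLine A b k r + (r - A (k + 1)) := by
  unfold supportLine; push_cast; linear_combination h.b_succ_sub k

theorem supportLine_self (k : ℕ) : supportLine A b k (A k) = b k := by
  simp [supportLine]

theorem supportLine_succ_corner (h : ConvexCorners A b) (k : ℕ) :
    supportLine A b k (A (k + 1)) = b (k + 1) := by
  unfold supportLine; linarith [h.b_succ_sub k]

theorem supportLine_le_of_le (h : ConvexCorners A b) {j m : ℕ} (hjm : j ≤ m) {r : ℝ}
    (hr : A m ≤ r) : supportLine A b j r ≤ supportLine A b m r := by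
  induction m, hjm using Nat.le_induction with
  | base => rfl
  | succ m _ ih =>
    rw [h.supportLine_succ]
    linarith [ih ((h.monotone m.le_succ).trans hr)]

theorem supportLine_le_of_ge (h : ConvexCorners A b) {j m : ℕ} (hjm : j ≤ m) {r : ℝ}
    (hr : r ≤ A j) : supportLine A b m r ≤ supportLine A b j r := by
  induction m, hjm using Nat.le_induction with
  | base => rfl
  | succ m hjm ih =>
    rw [h.supportLine_succ]
    linarith [hr.trans (h.monotone (hjm.trans m.le_succ))]

theorem supportLine_zero_nonpos (h : ConvexCorners A b) (k : ℕ) : supportLine A b k 0 ≤ 0 :=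
  (h.supportLine_le_of_ge k.zero_le h.A_zero.ge).trans (by simp [supportLine, h.A_zero, h.b_zero])

theorem bddAbove_range_supportLine (h : ConvexCorners A b) (r : ℝ) :
    BddAbove (range fun k => supportLine A b k r) := by
  obtain ⟨K, hK⟩ := exists_nat_ge r
  refine ⟨(Finset.range (K + 1)).sup' Finset.nonempty_range_add_one (supportLine A b · r), ?_⟩
  rintro _ ⟨j, rfl⟩
  rcases le_total j K with hjK | hKj
  · exact Finset.le_sup' (supportLine A b · r) (Finset.mem_range_succ_iff.2 hjK)
  · exact (h.supportLine_le_of_ge hKj (hK.trans (h.natCast_le K))).trans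
      (Finset.le_sup' (supportLine A b · r) (Finset.self_mem_range_succ K))

theorem cornerFunction_eq (h : ConvexCorners A b) {k : ℕ} {r : ℝ} (hk : A k ≤ r)
    (hk' : r ≤ A (k + 1)) : cornerFunction A b r = supportLine A b k r := by
  refine le_antisymm (ciSup_le fun j => ?_) (le_ciSup (h.bddAbove_range_supportLine r) k)
  rcases le_total j k with hjk | hkj
  · exact h.supportLine_le_of_le hjk hk
  · obtain hjk | rfl := hkj.lt_or_eq
    · calc supportLine A b j r ≤ supportLine A b (k + 1) r := h.supportLine_le_of_ge hjk hk'
        _ ≤ supportLine A b k r := by rw [h.supportLine_succ]; linarith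
    · rfl

theorem convexOn_cornerFunction_norm {E : Type*} [SeminormedAddCommGroup E] [NormedSpace ℝ E]
    (h : ConvexCorners A b) : ConvexOn ℝ univ fun x : E => cornerFunction A b ‖x‖ := by
  refine convexOn_ciSup (fun k => ?_) fun x _ => h.bddAbove_range_supportLine ‖x‖
  refine (((convexOn_norm convex_univ).smul (by positivity : (0 : ℝ) ≤ k + 1)).add_const
    (supportLine A b k 0)).congr fun x _ => ?_
  simp only [Pi.add_apply, smul_eq_mul, supportLine_eq_add A b k ‖x‖]

theorem tendsto_cornerFunction_div (h : ConvexCorners A b) :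
    Tendsto (fun r => cornerFunction A b r / r) atTop atTop := by
  refine tendsto_atTop.2 fun C => ?_
  obtain ⟨k, hk⟩ := exists_nat_gt C
  have hline : Tendsto (fun r => (k + 1 : ℝ) + supportLine A b k 0 / r) atTop (𝓝 (k + 1)) := by
    simpa using tendsto_const_nhds.add
      ((tendsto_const_nhds (x := supportLine A b k 0)).div_atTop tendsto_id)
  filter_upwards [hline.eventually_const_lt (show C < k + 1 by linarith), eventually_gt_atTop 0]
    with r hr hr0
  calc C ≤ (k + 1) + supportLine A b k 0 / r := hr.le
    _ = supportLine A b k r / r := by rw [supportLine_eq_add A b k r]; field_simp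
    _ ≤ cornerFunction A b r / r := by
      gcongr; exact le_ciSup (h.bddAbove_range_supportLine r) k

end ConvexCorners

theorem exists_convexCorners_le_setLIntegral {G : ℝ → ℝ≥0∞}
    (hG : ∀ a, Tendsto (fun c => ∫⁻ t in Ioo a c, G t) atTop (𝓝 ∞)) (w : ℕ → ℝ≥0∞)
    (hw : ∀ k, w k ≠ ∞) :
    ∃ A b : ℕ → ℝ, ConvexCorners A b ∧ ∀ k, w k ≤ ∫⁻ t in Ioo (b k) (b (k + 1)), G t := by
  have hnext (a : ℝ) (k : ℕ) : ∃ c, a + (k + 1) ≤ c ∧ w k ≤ ∫⁻ t in Ioo a c, G t :=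
    ((eventually_ge_atTop _).and ((hG a).eventually_const_lt (hw k).lt_top)).exists.imp
      fun _ hc => ⟨hc.1, hc.2.le⟩
  choose next hnext_ge hnext_le using hnext
  let b : ℕ → ℝ := fun k => Nat.rec 0 (fun k bk => next bk k) k
  let A : ℕ → ℝ := fun k => ∑ j ∈ Finset.range k, (b (j + 1) - b j) / (j + 1)
  have hA_succ (k : ℕ) : A (k + 1) = A k + (b (k + 1) - b k) / (k + 1) :=
    Finset.sum_range_succ _ k
  refine ⟨A, b, ⟨by simp [A], rfl, fun k => ?_, fun k => ?_⟩, fun k => hnext_le (b k) k⟩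
  · rw [hA_succ, add_le_add_iff_left, le_div_iff₀ (by positivity)]
    linarith [hnext_ge (b k) k]
  · rw [hA_succ]; field_simp; ring

theorem ConvexCorners.setLIntegral_Ioi_eq_top {A b : ℕ → ℝ} (h : ConvexCorners A b)
    {ζ : ℝ → ℝ} (hζ : ∀ t, 0 ≤ ζ t) (m : ℕ)
    (hmass : ∀ k : ℕ, ENNReal.ofReal ((k + 1) ^ (m + 1))
      ≤ ∫⁻ t in Ioo (b k) (b (k + 1)), ENNReal.ofReal (t ^ m * ζ t)) :
    ∫⁻ r in Ioi 0, ENNReal.ofReal (r ^ m * ζ (cornerFunction A b r)) = ∞ := by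
  have hpiece (k : ℕ) :
      1 ≤ ∫⁻ r in Ioo (A k) (A (k + 1)), ENNReal.ofReal (r ^ m * ζ (cornerFunction A b r)) := by
    have hsub := setLIntegral_Ioo_affine_le hζ m (by positivity : (0 : ℝ) < k + 1)
      (h.supportLine_zero_nonpos k) (α := A k) (β := A (k + 1))
      (by rw [← supportLine_eq_add, supportLine_self]; exact h.b_nonneg k)
    rw [← supportLine_eq_add, ← supportLine_eq_add, supportLine_self,
      h.supportLine_succ_corner] at hsub
    rw [setLIntegral_congr_fun measurableSet_Ioo fun r hr => by
      rw [h.cornerFunction_eq hr.1.le hr.2.le, supportLine_eq_add]]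
    have hpos : ENNReal.ofReal ((k + 1) ^ (m + 1)) ≠ 0 := by positivity
    rw [← ENNReal.mul_le_mul_iff_right hpos ENNReal.ofReal_ne_top, mul_one]
    exact (hmass k).trans hsub
  have hdisj : Pairwise (Function.onFun Disjoint fun k => Ioo (A k) (A (k + 1))) := by
    simpa using h.monotone.pairwise_disjoint_on_Ioo_succ
  refine top_unique ?_
  calc ∞ = ∑' _ : ℕ, (1 : ℝ≥0∞) := ENNReal.tsum_const_eq_top_of_ne_zero one_ne_zero |>.symm
    _ ≤ ∑' k, ∫⁻ r in Ioo (A k) (A (k + 1)), ENNReal.ofReal (r ^ m * ζ (cornerFunction A b r)) :=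
      ENNReal.tsum_le_tsum hpiece
    _ = ∫⁻ r in ⋃ k, Ioo (A k) (A (k + 1)), ENNReal.ofReal (r ^ m * ζ (cornerFunction A b r)) :=
      (lintegral_iUnion (fun _ => measurableSet_Ioo) hdisj _).symm
    _ ≤ _ := lintegral_mono_set <| iUnion_subset fun k r hr =>
      (h.A_zero.symm.le.trans (h.monotone k.zero_le)).trans_lt hr.1

/-- If `ζ : ℝ → [0,∞)` is continuous with
`∫₀^∞ t^(n-1) ζ(t) dt = ∞`, then there is a convex super-coercive `u : ℝⁿ → ℝ`
with `∫_{ℝⁿ} ζ(u(x)) dx = ∞`. -/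
theorem stmt0 (n : ℕ) (hn : 1 ≤ n) (ζ : ℝ → ℝ) (hζc : Continuous ζ) (hζ0 : ∀ t, 0 ≤ ζ t)
    (hdiv : ∫⁻ t in Set.Ioi (0 : ℝ), ENNReal.ofReal (t ^ (n - 1) * ζ t) = ⊤) :
    ∃ u : EuclideanSpace ℝ (Fin n) → ℝ,
      ConvexOn ℝ Set.univ u ∧
      Tendsto (fun x => u x / ‖x‖) (cocompact (EuclideanSpace ℝ (Fin n))) atTop ∧
      ∫⁻ x, ENNReal.ofReal (ζ (u x)) = ⊤ := by
  obtain ⟨A, b, hAb, hmass⟩ := exists_convexCorners_le_setLIntegral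
    (tendsto_setLIntegral_Ioo_atTop (by fun_prop) hdiv)
    (fun k => ENNReal.ofReal ((k + 1) ^ n)) fun _ => ENNReal.ofReal_ne_top
  refine ⟨fun x => cornerFunction A b ‖x‖, hAb.convexOn_cornerFunction_norm,
    hAb.tendsto_cornerFunction_div.comp tendsto_norm_cocompact_atTop, ?_⟩
  have : Nonempty (Fin n) := ⟨⟨0, hn⟩⟩
  refine (lintegral_comp_norm_eq_top_iff volume (g := fun r => ζ (cornerFunction A b r))
    (hζc.measurable.comp (measurable_cornerFunction A b)) fun r => hζ0 _).2 ?_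
  rw [finrank_euclideanSpace_fin]
  refine hAb.setLIntegral_Ioi_eq_top hζ0 (n - 1) fun k => ?_
  rw [Nat.sub_add_cancel hn]
  exact hmass k
end

section
/- Let u : ℝⁿ → (-∞,∞] be convex, proper, lower semicontinuous. Then u is coercive (i.e., u(x) → ∞ as |x| → ∞) if and only if 0 lies in the interior of dom u*, where u* is the Legendre transform of u. -/
open MeasureTheory Filter

noncomputable def conj {n : ℕ} (u : EuclideanSpace ℝ (Fin n) → EReal)
    (x : EuclideanSpace ℝ (Fin n)) : EReal :=
  ⨆ y, ((inner ℝ x y : ℝ) : EReal) - u y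

/-- Convexity for extended-real-valued functions on `ℝⁿ`. -/
def ErealConvexOn {n : ℕ} (u : EuclideanSpace ℝ (Fin n) → EReal) : Prop :=
  ∀ x y : EuclideanSpace ℝ (Fin n), ∀ a b : ℝ, 0 ≤ a → 0 ≤ b → a + b = 1 →
    u (a • x + b • y) ≤ (a : EReal) * u x + (b : EReal) * u y

/-- Proper: never `-∞` and not identically `+∞`. -/
def EProper {n : ℕ} (u : EuclideanSpace ℝ (Fin n) → EReal) : Prop :=
  (∀ x, u x ≠ ⊥) ∧ ∃ x, u x ≠ ⊤

/-- Coercive: `u x → ∞` as `‖x‖ → ∞`. -/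
def ECoercive {n : ℕ} (u : EuclideanSpace ℝ (Fin n) → EReal) : Prop :=
  ∀ M : ℝ, ∃ R : ℝ, ∀ x, R ≤ ‖x‖ → (M : EReal) ≤ u x

/-- Super-coercive: `u x / ‖x‖ → ∞` as `‖x‖ → ∞`. -/
def ESuperCoercive {n : ℕ} (u : EuclideanSpace ℝ (Fin n) → EReal) : Prop :=
  ∀ M : ℝ, ∃ R : ℝ, ∀ x, R ≤ ‖x‖ → ((M * ‖x‖ : ℝ) : EReal) ≤ u x

/-!
Both sides are equivalent to linear growth, `ε ‖y‖ - C ≤ u y` with `ε > 0`. Linear growth bounds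
`u*` by `C` on the ball of radius `ε`. Conversely, a bound `C` for `u*` at the `2n` points `±δ eᵢ`
gives `u y ≥ δ |yᵢ| - C` for every coordinate, and some coordinate has `|yᵢ| ≥ ‖y‖ / √n`.
Finally, a coercive convex function grows linearly: if `u ≥ u x₀ + 1` on the sphere of radius `R`
about `x₀`, convexity along the ray from `x₀` through `y` gives `u y ≥ u x₀ + ‖y - x₀‖ / R` outside
it, and lower semicontinuity bounds `u` below on the closed ball.
-/

theorem EReal.coe_sub_le_comm {a c : ℝ} {x : EReal} :
    (a : EReal) - x ≤ c ↔ ((a - c : ℝ) : EReal) ≤ x := by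
  induction x with
  | bot => simpa using EReal.coe_ne_bot (a - c)
  | coe r => norm_cast; constructor <;> intro <;> linarith
  | top => simp

theorem LowerSemicontinuous.exists_coe_le_of_isCompact {E : Type*} [TopologicalSpace E]
    {u : E → EReal} (hlsc : LowerSemicontinuous u) (hbot : ∀ x, u x ≠ ⊥) {K : Set E}
    (hK : IsCompact K) : ∃ m : ℝ, ∀ y ∈ K, (m : EReal) ≤ u y := by
  rcases K.eq_empty_or_nonempty with rfl | hne
  · exact ⟨0, by simp⟩
  obtain ⟨a, -, hmin⟩ := (hlsc.lowerSemicontinuousOn K).exists_isMinOn hne hK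
  obtain ⟨m, -, hm⟩ := EReal.lt_iff_exists_real_btwn.mp (bot_lt_iff_ne_bot.mpr (hbot a))
  exact ⟨m, fun y hy => hm.le.trans (hmin hy)⟩

theorem EuclideanSpace.exists_norm_le_sqrt_mul_abs {n : ℕ} (hn : 0 < n)
    (y : EuclideanSpace ℝ (Fin n)) : ∃ i, ‖y‖ ≤ √n * |y i| := by
  obtain ⟨i, -, hi⟩ := Finset.univ.exists_max_image (fun j => |y j|) ⟨⟨0, hn⟩, Finset.mem_univ _⟩
  refine ⟨i, ?_⟩
  have hsum : ∑ j, ‖y j‖ ^ 2 ≤ n * |y i| ^ 2 := by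
    calc ∑ j, ‖y j‖ ^ 2 ≤ ∑ _j : Fin n, |y i| ^ 2 :=
          Finset.sum_le_sum fun j _ => pow_le_pow_left₀ (abs_nonneg _) (hi j (Finset.mem_univ j)) 2
      _ = n * |y i| ^ 2 := by simp
  rw [EuclideanSpace.norm_eq, ← Real.sqrt_sq (abs_nonneg (y i)),
    ← Real.sqrt_mul (Nat.cast_nonneg n)]
  exact Real.sqrt_le_sqrt hsum

def EGrowsLinearly {n : ℕ} (u : EuclideanSpace ℝ (Fin n) → EReal) : Prop :=
  ∃ ε > 0, ∃ C : ℝ, ∀ y, ((ε * ‖y‖ - C : ℝ) : EReal) ≤ u y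

section

variable {n : ℕ} {u : EuclideanSpace ℝ (Fin n) → EReal}

theorem conj_le_coe_iff {x : EuclideanSpace ℝ (Fin n)} {C : ℝ} :
    conj u x ≤ C ↔ ∀ y, ((inner ℝ x y - C : ℝ) : EReal) ≤ u y :=
  iSup_le_iff.trans (forall_congr' fun _ => EReal.coe_sub_le_comm)

theorem ErealConvexOn.coe_add_div_le_of_sphere {x₀ y : EuclideanSpace ℝ (Fin n)} {a R : ℝ}
    (hconv : ErealConvexOn u) (hx₀ : u x₀ = a) (hR : 0 < R) (hy : R ≤ ‖y - x₀‖)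
    (hsphere : ∀ z, ‖z - x₀‖ = R → ((a + 1 : ℝ) : EReal) ≤ u z) :
    ((a + ‖y - x₀‖ / R : ℝ) : EReal) ≤ u y := by
  set d := ‖y - x₀‖
  have hd : 0 < d := hR.trans_le hy
  set t := R / d
  have ht : 0 < t := div_pos hR hd
  have hz : ‖((1 - t) • x₀ + t • y) - x₀‖ = R := by
    rw [show (1 - t) • x₀ + t • y - x₀ = t • (y - x₀) by module, norm_smul,
      Real.norm_of_nonneg ht.le, div_mul_cancel₀ R hd.ne']
  have hchord : ((a + 1 : ℝ) : EReal) ≤ ((1 - t : ℝ) : EReal) * a + (t : EReal) * u y := by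
    rw [← hx₀]
    exact (hsphere _ hz).trans
      (hconv x₀ y (1 - t) t (by linarith [(div_le_one hd).mpr hy]) ht.le (by ring))
  generalize u y = v at hchord ⊢
  induction v with
  | bot =>
    rw [EReal.coe_mul_bot_of_pos ht, EReal.add_bot, le_bot_iff] at hchord
    exact absurd hchord (EReal.coe_ne_bot _)
  | coe r =>
    norm_cast at hchord ⊢
    have hdR : d / R = 1 / t := by simp [t]
    have hinv := (div_le_iff₀ ht).mpr (show 1 ≤ (r - a) * t by linarith)
    linarith
  | top => exact le_top

theorem ECoercive.eGrowsLinearly (hconv : ErealConvexOn u) (hproper : EProper u)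
    (hlsc : LowerSemicontinuous u) (hcoer : ECoercive u) : EGrowsLinearly u := by
  obtain ⟨hbot, x₀, hx₀⟩ := hproper
  set a := (u x₀).toReal
  have hux₀ : u x₀ = a := (EReal.coe_toReal hx₀ (hbot x₀)).symm
  obtain ⟨R, hR⟩ := hcoer (a + 1)
  set R' := max (R + ‖x₀‖) 1
  have hR' : 0 < R' := one_pos.trans_le (le_max_right _ _)
  have hsphere : ∀ z, ‖z - x₀‖ = R' → ((a + 1 : ℝ) : EReal) ≤ u z := fun z hz =>
    hR z (by linarith [norm_sub_le z x₀, le_max_left (R + ‖x₀‖) 1])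
  obtain ⟨m, hm⟩ := hlsc.exists_coe_le_of_isCompact hbot (isCompact_closedBall x₀ R')
  set b := min m a
  have hgrowth : ∀ y, ((b - 1 + ‖y - x₀‖ / R' : ℝ) : EReal) ≤ u y := by
    intro y
    by_cases hy : ‖y - x₀‖ ≤ R'
    · refine (EReal.coe_le_coe_iff.mpr ?_).trans (hm y (mem_closedBall_iff_norm.mpr hy))
      linarith [min_le_left m a, (div_le_one hR').mpr hy]
    · refine (EReal.coe_le_coe_iff.mpr ?_).trans
        (hconv.coe_add_div_le_of_sphere hux₀ hR' (not_le.mp hy).le hsphere)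
      linarith [min_le_right m a]
  refine ⟨R'⁻¹, inv_pos.mpr hR', R'⁻¹ * ‖x₀‖ + 1 - b, fun y =>
    (EReal.coe_le_coe_iff.mpr ?_).trans (hgrowth y)⟩
  have := mul_le_mul_of_nonneg_left (norm_sub_norm_le y x₀) (inv_nonneg.mpr hR'.le)
  rw [div_eq_inv_mul]
  linarith

theorem EGrowsLinearly.zero_mem_interior_dom_conj (h : EGrowsLinearly u) :
    (0 : EuclideanSpace ℝ (Fin n)) ∈ interior {x | conj u x < ⊤} := by
  obtain ⟨ε, hε, C, hC⟩ := h
  refine mem_interior.mpr ⟨Metric.ball 0 ε, fun x hx => ?_, Metric.isOpen_ball,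
    Metric.mem_ball_self hε⟩
  have : conj u x ≤ C := conj_le_coe_iff.mpr fun y =>
    (EReal.coe_le_coe_iff.mpr (by
      linarith [real_inner_le_norm x y,
        mul_le_mul_of_nonneg_right (mem_ball_zero_iff.mp hx).le (norm_nonneg y)])).trans (hC y)
  exact this.trans_lt (EReal.coe_lt_top C)

theorem EGrowsLinearly.of_zero_mem_interior_dom_conj (hn : 0 < n)
    (h : (0 : EuclideanSpace ℝ (Fin n)) ∈ interior {x | conj u x < ⊤}) : EGrowsLinearly u := by
  obtain ⟨ε, hε, hball⟩ := Metric.mem_nhds_iff.mp (mem_interior_iff_mem_nhds.mp h)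
  set δ := ε / 2
  have hδpos : 0 < δ := half_pos hε
  have hfin : ∀ i s, |s| < ε → conj u (EuclideanSpace.single i s) < ⊤ := fun i s hs =>
    hball (by rwa [mem_ball_zero_iff, PiLp.norm_single])
  have hδ : |δ| < ε := by rw [abs_of_pos hδpos]; exact half_lt_self hε
  set c : Fin n → EReal := fun i =>
    max (conj u (EuclideanSpace.single i δ)) (conj u (EuclideanSpace.single i (-δ)))
  have hsup : Finset.univ.sup c < ⊤ :=
    (Finset.sup_lt_iff bot_lt_top).mpr fun i _ =>
      max_lt (hfin i δ hδ) (hfin i (-δ) (by rwa [abs_neg]))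
  obtain ⟨C, hC, -⟩ := EReal.lt_iff_exists_real_btwn.mp hsup
  have hcoord : ∀ y i, ((δ * |y i| - C : ℝ) : EReal) ≤ u y := by
    intro y i
    have hbound : c i ≤ C := (Finset.le_sup (f := c) (Finset.mem_univ i)).trans hC.le
    rcases abs_choice (y i) with hy | hy
    · simpa [EuclideanSpace.inner_single_left, hy] using
        conj_le_coe_iff.mp (le_max_left _ _ |>.trans hbound) y
    · simpa [EuclideanSpace.inner_single_left, hy] using
        conj_le_coe_iff.mp (le_max_right _ _ |>.trans hbound) y
  have hsqrt : 0 < √(n : ℝ) := Real.sqrt_pos.mpr (Nat.cast_pos.mpr hn)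
  refine ⟨δ / √n, div_pos hδpos hsqrt, C, fun y => ?_⟩
  obtain ⟨i, hi⟩ := EuclideanSpace.exists_norm_le_sqrt_mul_abs hn y
  refine (EReal.coe_le_coe_iff.mpr ?_).trans (hcoord y i)
  have := mul_le_mul_of_nonneg_left hi (div_pos hδpos hsqrt).le
  rw [← mul_assoc, div_mul_cancel₀ _ hsqrt.ne'] at this
  linarith

theorem ECoercive.of_eGrowsLinearly (h : EGrowsLinearly u) : ECoercive u := by
  obtain ⟨ε, hε, C, hC⟩ := h
  refine fun M => ⟨(M + C) / ε, fun x hx => (EReal.coe_le_coe_iff.mpr ?_).trans (hC x)⟩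
  linarith [(div_le_iff₀' hε).mp hx]

end

/-- A convex, proper, lsc function `u : ℝⁿ → (-∞,∞]` is
coercive iff `0 ∈ int dom u*`. -/
theorem stmt2 (n : ℕ) (u : EuclideanSpace ℝ (Fin n) → EReal)
    (hconv : ErealConvexOn u) (hproper : EProper u) (hlsc : LowerSemicontinuous u) :
    ECoercive u ↔ (0 : EuclideanSpace ℝ (Fin n)) ∈ interior {x | conj u x < ⊤} := by
  refine ⟨fun hcoer => (hcoer.eGrowsLinearly hconv hproper hlsc).zero_mem_interior_dom_conj,
    fun h => ?_⟩
  rcases Nat.eq_zero_or_pos n with rfl | hn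
  · exact fun _ => ⟨1, fun x hx => by norm_num [Subsingleton.elim x 0] at hx⟩
  · exact .of_eGrowsLinearly (.of_zero_mem_interior_dom_conj hn h)
end

section
/- With g_k defined via g_k(r) = r for r ≤ sf_k and g_k(r) = sf_{k+j} + (k+j+1)(r − sf_{k+j−1} − k!) on (sf_{k+j−1} + k!, sf_{k+j} + k!], j ∈ ℕ₀, where sf_k = Σ_{i=1}^k i!, the function g_k is strictly increasing and convex on ℝ. -/
open Filter

/-- `sf k = Σ_{i=1}^k i!`, the sum of the first `k` factorials. -/
noncomputable def sf (k : ℕ) : ℝ := ∑ i ∈ Finset.Icc 1 k, (Nat.factorial i : ℝ)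

noncomputable def aK (k j : ℕ) : ℝ :=
  sf (k + j) - (Nat.factorial (k + j) : ℝ) + (Nat.factorial k : ℝ)

noncomputable def bK (k j : ℕ) : ℝ := sf (k + j) + (Nat.factorial k : ℝ)

noncomputable def LK (k j : ℕ) (t : ℝ) : ℝ :=
  sf (k + j) + ((k + j + 1 : ℕ) : ℝ) * (t - aK k j)

lemma sf_succ (n : ℕ) : sf (n + 1) = sf n + (Nat.factorial (n + 1) : ℝ) := by
  unfold sf
  rw [Finset.sum_Icc_succ_top (by omega : 1 ≤ n + 1)]

lemma sf_mono {n m : ℕ} (h : n ≤ m) : sf n ≤ sf m := by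
  unfold sf
  apply Finset.sum_le_sum_of_subset_of_nonneg
  · exact Finset.Icc_subset_Icc le_rfl h
  · intro i _ _; positivity

lemma bK_mono (k : ℕ) {i m : ℕ} (h : i ≤ m) : bK k i ≤ bK k m := by
  unfold bK
  have := sf_mono (Nat.add_le_add_left h k)
  linarith

lemma bK_eq_aK (k j : ℕ) : bK k j = aK k (j + 1) := by
  unfold bK aK
  have : k + (j + 1) = (k + j) + 1 := rfl
  rw [this, sf_succ]
  ring

lemma aK_zero (k : ℕ) : aK k 0 = sf k := by
  unfold aK
  simp

lemma LK_step (k n : ℕ) (t : ℝ) : LK k n t - LK k (n + 1) t = bK k n - t := by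
  unfold LK aK bK
  have h1 : k + (n + 1) = (k + n) + 1 := rfl
  rw [h1, sf_succ]
  have h2 : (Nat.factorial ((k + n) + 1) : ℝ)
      = ((k + n : ℕ) + 1 : ℝ) * (Nat.factorial (k + n) : ℝ) := by
    rw [Nat.factorial_succ]; push_cast; ring
  rw [h2]
  push_cast
  ring

lemma LK_zero_sub (k : ℕ) (t : ℝ) : LK k 0 t - t = (k : ℝ) * (t - sf k) := by
  unfold LK aK
  push_cast
  ring

lemma LK_le_left (k : ℕ) {i m : ℕ} (him : i ≤ m) {t : ℝ} (ht : t ≤ bK k i) :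
    LK k m t ≤ LK k i t := by
  induction m, him using Nat.le_induction with
  | base => exact le_refl _
  | succ m hm ih =>
      have h1 : t ≤ bK k m := ht.trans (bK_mono k hm)
      have h2 := LK_step k m t
      linarith

lemma LK_le_right (k : ℕ) {i m : ℕ} (him : i ≤ m) {t : ℝ}
    (ht : ∀ n, n < m → bK k n ≤ t) : LK k i t ≤ LK k m t := by
  induction m, him using Nat.le_induction with
  | base => exact le_refl _
  | succ m hm ih =>
      have h1 : bK k m ≤ t := ht m (Nat.lt_succ_self m)
      have h2 := LK_step k m t
      have h3 := ih (fun n hn => ht n (Nat.lt_succ_of_lt hn))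
      linarith

lemma sf_ge_fact {n : ℕ} (hn : 1 ≤ n) : (Nat.factorial n : ℝ) ≤ sf n := by
  unfold sf
  apply Finset.single_le_sum (f := fun i => (Nat.factorial i : ℝ))
  · intro i _; positivity
  · simp [Finset.mem_Icc]; omega

lemma cover (k : ℕ) (hk : 1 ≤ k) {t : ℝ} (ht : sf k < t) :
    ∃ j, aK k j < t ∧ t ≤ bK k j := by
  have hex : ∃ j, t ≤ bK k j := by
    obtain ⟨j, hj⟩ := exists_nat_ge t
    refine ⟨j, hj.trans ?_⟩
    have h1 : (j : ℝ) ≤ (Nat.factorial (k + j) : ℝ) := by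
      exact_mod_cast (Nat.le_add_left j k).trans (Nat.self_le_factorial _)
    have h2 : (Nat.factorial (k + j) : ℝ) ≤ sf (k + j) := sf_ge_fact (by omega)
    have h3 : (0:ℝ) ≤ (Nat.factorial k : ℝ) := by positivity
    unfold bK; linarith
  classical
  let j := Nat.find hex
  refine ⟨j, ?_, Nat.find_spec hex⟩
  rcases Nat.eq_zero_or_pos j with h0 | h0
  · rw [h0, aK_zero]; exact ht
  · obtain ⟨j', hj'⟩ : ∃ j', j = j' + 1 := ⟨j - 1, by omega⟩
    have hmin := Nat.find_min hex (m := j') (by omega)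
    rw [hj', ← bK_eq_aK]
    exact lt_of_not_ge hmin


/-- `IsGk k g` says that `g` is the function `g_k` from the paper:
`g(r) = r` for `r ≤ sf k`, and
`g(r) = sf (k+j) + (k+j+1)(r − sf (k+j−1) − k!)` for
`sf (k+j−1) + k! < r ≤ sf (k+j) + k!`, `j ∈ ℕ₀`, where
`sf (k+j-1) + k!` is written as `sf (k+j) − (k+j)! + k!`. -/
def IsGk (k : ℕ) (g : ℝ → ℝ) : Prop :=
  (∀ r : ℝ, r ≤ sf k → g r = r) ∧
  ∀ j : ℕ, ∀ r : ℝ,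
    sf (k + j) - (Nat.factorial (k + j) : ℝ) + (Nat.factorial k : ℝ) < r →
    r ≤ sf (k + j) + (Nat.factorial k : ℝ) →
    g r = sf (k + j) + ((k + j + 1 : ℕ) : ℝ) *
      (r - (sf (k + j) - (Nat.factorial (k + j) : ℝ) + (Nat.factorial k : ℝ)))


lemma g_piece (k : ℕ) (g : ℝ → ℝ) (hg : IsGk k g) {j : ℕ} {t : ℝ}
    (h1 : aK k j < t) (h2 : t ≤ bK k j) : g t = LK k j t := by
  have := hg.2 j t h1 h2
  rw [this]; rfl

lemma bK_le_of_lt_aK (k : ℕ) {n j : ℕ} (h : n < j) : bK k n ≤ aK k j := by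
  obtain ⟨j', rfl⟩ : ∃ j', j = j' + 1 := ⟨j - 1, by omega⟩
  rw [← bK_eq_aK]
  exact bK_mono k (by omega)

/-- Key lemma A: each affine piece lies below `g` everywhere. -/
lemma support (k : ℕ) (hk : 1 ≤ k) (g : ℝ → ℝ) (hg : IsGk k g) (m : ℕ) (t : ℝ) :
    LK k m t ≤ g t := by
  rcases le_or_gt t (sf k) with h | h
  · rw [hg.1 t h]
    have h0 : t ≤ bK k 0 := by
      unfold bK
      have : (0:ℝ) ≤ (Nat.factorial k : ℝ) := by positivity
      simpa using by linarith
    have h1 : LK k m t ≤ LK k 0 t := LK_le_left k (Nat.zero_le m) h0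
    have h2 := LK_zero_sub k t
    have hkk : (0:ℝ) ≤ (k:ℝ) := by positivity
    nlinarith
  · obtain ⟨j, hj1, hj2⟩ := cover k hk h
    rw [g_piece k g hg hj1 hj2]
    rcases le_or_gt m j with hmj | hjm
    · exact LK_le_right k hmj (fun n hn => (bK_le_of_lt_aK k hn).trans hj1.le)
    · exact LK_le_left k hjm.le hj2

/-- Key lemma B: `g t ≥ t`. -/
lemma ge_id (k : ℕ) (hk : 1 ≤ k) (g : ℝ → ℝ) (hg : IsGk k g) (t : ℝ) :
    t ≤ g t := by
  rcases le_or_gt t (sf k) with h | h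
  · rw [hg.1 t h]
  · obtain ⟨j, hj1, hj2⟩ := cover k hk h
    rw [g_piece k g hg hj1 hj2]
    have h1 : LK k 0 t ≤ LK k j t :=
      LK_le_right k (Nat.zero_le j) (fun n hn => (bK_le_of_lt_aK k hn).trans hj1.le)
    have h2 := LK_zero_sub k t
    have hkk : (0:ℝ) ≤ (k:ℝ) := by positivity
    nlinarith

lemma LK_affine (k j : ℕ) {a b x y : ℝ} (hab : a + b = 1) :
    LK k j (a * x + b * y) = a * LK k j x + b * LK k j y := by
  have hb : b = 1 - a := by linarith
  subst hb
  unfold LK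
  ring

/-- The function `g_k` is strictly increasing and convex. -/
theorem stmt7 (k : ℕ) (hk : 1 ≤ k) (g : ℝ → ℝ) (hg : IsGk k g) :
    StrictMono g ∧ ConvexOn ℝ Set.univ g := by
  constructor
  · intro x y hxy
    rcases le_or_gt x (sf k) with h | h
    · have h1 := ge_id k hk g hg y
      rw [hg.1 x h]
      linarith
    · obtain ⟨j, hj1, hj2⟩ := cover k hk h
      rw [g_piece k g hg hj1 hj2]
      have h1 := support k hk g hg j y
      have hs : (0:ℝ) < ((k + j + 1 : ℕ) : ℝ) := by positivity
      have h2 : LK k j x < LK k j y := by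
        unfold LK; nlinarith
      linarith
  · refine ⟨convex_univ, ?_⟩
    intro x _ y _ a b ha hb hab
    simp only [smul_eq_mul]
    set z := a * x + b * y with hz
    have hx := support k hk g hg
    rcases le_or_gt z (sf k) with h | h
    · rw [hg.1 z h]
      have h1 := ge_id k hk g hg x
      have h2 := ge_id k hk g hg y
      nlinarith
    · obtain ⟨j, hj1, hj2⟩ := cover k hk h
      rw [g_piece k g hg hj1 hj2, hz, LK_affine k j hab]
      have h1 := support k hk g hg j x
      have h2 := support k hk g hg j y
      nlinarith
end

section
/- Let ζ : ℝ → [0,∞) be continuous with ∫₀^∞ t^{n−1} ζ(t) dt < ∞. Then for every convex, coercive function u : ℝⁿ → ℝ, the integral ∫_{ℝⁿ} ζ(u(x)) dx is finite, and the map u ↦ ∫_{ℝⁿ} ζ(u(x)) dx satisfies the valuation property: Z(u) + Z(v) = Z(u ∨ v) + Z(u ∧ v) whenever u, v, u ∧ v are all convex and coercive. -/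
/-!
Convexity makes sublevel sets shrink at most like homotheties: if `u x₀ ≤ m`, the homothety of
ratio `l ≤ 1` about `x₀` maps `{u ≤ m + τ}` into `{u ≤ m + l τ}`, so `τ ↦ |{u ≤ m + τ}| / τⁿ` is
nonincreasing. Hence the push-forward of Lebesgue measure under `u` gives `(m + σ, m + τ]` mass at
most `C (τⁿ - σⁿ)` for `1 ≤ σ ≤ τ`, i.e. beyond `m + 1` it is dominated by `C n (t - m)ⁿ⁻¹ dt`,
and the moment condition on `ζ` bounds `∫ ζ ∘ u` there. Coercivity makes the remaining sublevel
set compact. The valuation identity then holds pointwise.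
-/

open MeasureTheory Filter Set Module
open scoped ENNReal

theorem Set.Ioc_inter_Ioi_eq_Ioc_max {α : Type*} [LinearOrder α] {a b c : α} :
    Ioc a b ∩ Ioi c = Ioc (max a c) (max b c) := by
  ext t
  simp only [mem_inter_iff, mem_Ioc, mem_Ioi, max_lt_iff, le_max_iff]
  grind

theorem StieltjesFunction.le_measure_of_forall_Ioc_le (f : StieltjesFunction ℝ) {ν : Measure ℝ}
    (h : ∀ a b, ν (Ioc a b) ≤ ENNReal.ofReal (f b - f a)) : ν ≤ f.measure := by
  refine Measure.le_iff.2 fun s _ => ?_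
  -- `f.measure` is the outer measure generated by the lengths `f b - f a` of the `Ioc a b`.
  rw [StieltjesFunction.measure_def]
  refine (OuterMeasure.le_ofFunction (m_empty := f.length_empty)).2 (fun t => ?_) s
  rw [f.length_eq]
  exact le_iInf₂ fun a b => le_iInf fun hts =>
    (measure_mono fun x hx => hts ⟨hx, not_isBot x⟩).trans (h a b)

def StieltjesFunction.truncPow {c m T : ℝ} (hc : 0 ≤ c) (hmT : m ≤ T) (d : ℕ) :
    StieltjesFunction ℝ where
  toFun t := c * (max t T - m) ^ d
  mono' a b hab := by
    have : m ≤ max a T := hmT.trans (le_max_right a T)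
    dsimp only
    gcongr
  right_continuous' _ := by fun_prop

theorem StieltjesFunction.measure_truncPow {c m T : ℝ} (hc : 0 ≤ c) (hmT : m ≤ T) (d : ℕ) :
    (truncPow hc hmT d).measure = (volume.restrict (Ioi T)).withDensity
      fun t => ENNReal.ofReal (c * d * (t - m) ^ (d - 1)) := by
  refine Measure.ext_of_Ioc _ _ fun a b hab => ?_
  have hab' : max a T ≤ max b T := max_le_max_right T hab.le
  have hderiv : ∀ t, HasDerivAt (fun t => c * (t - m) ^ d) (c * d * (t - m) ^ (d - 1)) t := by
    intro t
    simpa only [mul_assoc] using ((hasDerivAt_pow d (t - m)).comp_sub_const t m).const_mul c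
  have hnonneg : ∀ᵐ t ∂volume.restrict (Ioc (max a T) (max b T)),
      0 ≤ c * d * (t - m) ^ (d - 1) := by
    filter_upwards [ae_restrict_mem measurableSet_Ioc] with t ht
    have : m < t := hmT.trans_lt ((le_max_right a T).trans_lt ht.1)
    have : 0 ≤ t - m := by linarith
    positivity
  rw [StieltjesFunction.measure_Ioc, withDensity_apply _ measurableSet_Ioc,
    Measure.restrict_restrict measurableSet_Ioc, Ioc_inter_Ioi_eq_Ioc_max,
    ← ofReal_integral_eq_lintegral_ofReal (by fun_prop : Continuous _).integrableOn_Ioc hnonneg,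
    ← intervalIntegral.integral_of_le hab',
    intervalIntegral.integral_eq_sub_of_hasDerivAt (fun t _ => hderiv t)
      ((by fun_prop : Continuous _).intervalIntegrable _ _)]
  simp only [truncPow]

theorem setLIntegral_Ioi_ofReal_mul_sub_pow_mul_enorm_lt_top {ζ : ℝ → ℝ} {k : ℕ}
    (hmom : IntegrableOn (fun t => t ^ k * ζ t) (Ioi 0)) {c : ℝ} (hc : 0 ≤ c) (m : ℝ) :
    ∫⁻ t in Ioi (|m| + 1), ENNReal.ofReal (c * (t - m) ^ k) * ‖ζ t‖ₑ < ∞ := by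
  calc ∫⁻ t in Ioi (|m| + 1), ENNReal.ofReal (c * (t - m) ^ k) * ‖ζ t‖ₑ
      ≤ ∫⁻ t in Ioi (|m| + 1), ENNReal.ofReal (c * 2 ^ k) * ‖t ^ k * ζ t‖ₑ := by
        refine setLIntegral_mono' measurableSet_Ioi fun t ht => ?_
        have hmt : |m| + 1 < t := ht
        have hm : |m| < t := by linarith
        have ht0 : 0 < t := (abs_nonneg m).trans_lt hm
        rw [enorm_mul, Real.enorm_of_nonneg (pow_nonneg ht0.le k), ← mul_assoc,
          ← ENNReal.ofReal_mul (by positivity), mul_assoc, ← mul_pow]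
        gcongr <;> linarith [le_abs_self m, neg_abs_le m]
    _ = ENNReal.ofReal (c * 2 ^ k) * ∫⁻ t in Ioi (|m| + 1), ‖t ^ k * ζ t‖ₑ :=
        lintegral_const_mul' _ _ ENNReal.ofReal_ne_top
    _ ≤ ENNReal.ofReal (c * 2 ^ k) * ∫⁻ t in Ioi 0, ‖t ^ k * ζ t‖ₑ := by
        gcongr
        positivity
    _ < ∞ := ENNReal.mul_lt_top ENNReal.ofReal_lt_top hmom.2

theorem isCompact_setOf_le_of_tendsto_cocompact {X : Type*} [TopologicalSpace X] {u : X → ℝ}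
    (hu : Continuous u) (hcoer : Tendsto u (cocompact X) atTop) (c : ℝ) :
    IsCompact {x | u x ≤ c} := by
  obtain ⟨K, hK, hKc⟩ := mem_cocompact.1 (hcoer.eventually (eventually_gt_atTop c))
  refine hK.of_isClosed_subset (isClosed_le hu continuous_const) fun x hx => ?_
  by_contra hxK
  exact not_lt.2 (show u x ≤ c from hx) (show c < u x from hKc hxK)

section ConvexSublevel

variable {E : Type*} [NormedAddCommGroup E] [NormedSpace ℝ E] {u : E → ℝ} {x₀ : E} {m : ℝ}

theorem ConvexOn.homothety_image_setOf_le_add_subset (hu : ConvexOn ℝ univ u) (hx₀ : u x₀ ≤ m)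
    {l : ℝ} (hl₀ : 0 ≤ l) (hl₁ : l ≤ 1) (τ : ℝ) :
    AffineMap.homothety x₀ l '' {x | u x ≤ m + τ} ⊆ {x | u x ≤ m + l * τ} := by
  rintro _ ⟨y, hy, rfl⟩
  rw [AffineMap.homothety_eq_lineMap, AffineMap.lineMap_apply_module]
  have hy : u y ≤ m + τ := hy
  show u _ ≤ _
  calc u ((1 - l) • x₀ + l • y) ≤ (1 - l) * u x₀ + l * u y :=
        hu.2 trivial trivial (by linarith) hl₀ (by ring)
    _ ≤ (1 - l) * m + l * (m + τ) := by gcongr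
    _ = m + l * τ := by ring

variable [FiniteDimensional ℝ E]

theorem ConvexOn.continuous (hu : ConvexOn ℝ univ u) : Continuous u :=
  continuousOn_univ.1 (hu.continuousOn isOpen_univ)

variable [MeasurableSpace E] [BorelSpace E] (μ : Measure E) [μ.IsAddHaarMeasure]

theorem ConvexOn.ofReal_pow_mul_measure_setOf_le_add_le (hu : ConvexOn ℝ univ u)
    (hx₀ : u x₀ ≤ m) {l : ℝ} (hl₀ : 0 ≤ l) (hl₁ : l ≤ 1) (τ : ℝ) :
    ENNReal.ofReal (l ^ finrank ℝ E) * μ {x | u x ≤ m + τ} ≤ μ {x | u x ≤ m + l * τ} := by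
  rw [← abs_of_nonneg (pow_nonneg hl₀ _), ← Measure.addHaar_image_homothety μ x₀]
  exact measure_mono (hu.homothety_image_setOf_le_add_subset hx₀ hl₀ hl₁ τ)

theorem ConvexOn.measure_preimage_Ioc_le (hu : ConvexOn ℝ univ u) (hx₀ : u x₀ ≤ m)
    (hV : μ {x | u x ≤ m + 1} ≠ ∞) {a b : ℝ} (ha : m + 1 ≤ a) (hab : a ≤ b) :
    μ (u ⁻¹' Ioc a b) ≤ ENNReal.ofReal
      ((μ {x | u x ≤ m + 1}).toReal * ((b - m) ^ finrank ℝ E - (a - m) ^ finrank ℝ E)) := by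
  have hτ : 0 < b - m := by linarith
  have hV' := hu.ofReal_pow_mul_measure_setOf_le_add_le μ hx₀ (l := 1 / (b - m)) (by positivity)
    ((div_le_one hτ).2 (by linarith)) (b - m)
  have hB := hu.ofReal_pow_mul_measure_setOf_le_add_le μ hx₀ (l := (a - m) / (b - m))
    (div_nonneg (by linarith) hτ.le) ((div_le_one hτ).2 (by linarith)) (b - m)
  rw [one_div_mul_cancel hτ.ne'] at hV'
  rw [div_mul_cancel₀ _ hτ.ne'] at hB
  simp only [add_sub_cancel] at hV' hB
  have hA : μ {x | u x ≤ b} ≠ ∞ := by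
    intro h
    rw [h, ENNReal.mul_top (ENNReal.ofReal_pos.2 (by positivity)).ne'] at hV'
    exact hV (top_le_iff.1 hV')
  have hqp : (a - m) ^ finrank ℝ E ≤ (b - m) ^ finrank ℝ E :=
    pow_le_pow_left₀ (by linarith) (by linarith) _
  have hsub : {x | u x ≤ a} ⊆ {x | u x ≤ b} := fun x hx => le_trans hx hab
  have hBA : μ {x | u x ≤ a} ≤ μ {x | u x ≤ b} := measure_mono hsub
  have hpre : u ⁻¹' Ioc a b = {x | u x ≤ b} \ {x | u x ≤ a} := by
    ext x; simp [and_comm]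
  rw [hpre, measure_sdiff hsub
      (measurableSet_le hu.continuous.measurable measurable_const).nullMeasurableSet
      (ne_top_of_le_ne_top hA hBA),
    ENNReal.le_ofReal_iff_toReal_le (by finiteness)
      (mul_nonneg ENNReal.toReal_nonneg (sub_nonneg.2 hqp)), ENNReal.toReal_sub_of_le hBA hA]
  have hV'' := ENNReal.toReal_mono hV hV'
  have hB' := ENNReal.toReal_mono (ne_top_of_le_ne_top hA hBA) hB
  rw [ENNReal.toReal_mul, ENNReal.toReal_ofReal (by positivity), div_pow, one_pow,
    one_div_mul_eq_div, div_le_iff₀ (by positivity)] at hV''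
  rw [ENNReal.toReal_mul, ENNReal.toReal_ofReal (pow_nonneg (div_nonneg (by linarith) hτ.le) _),
    div_pow, div_mul_eq_mul_div, div_le_iff₀ (by positivity)] at hB'
  refine le_of_mul_le_mul_left ?_ (pow_pos hτ (finrank ℝ E))
  nlinarith [mul_le_mul_of_nonneg_left hV'' (sub_nonneg.2 hqp)]

theorem ConvexOn.map_restrict_Ioi_le_withDensity (hu : ConvexOn ℝ univ u) (hx₀ : u x₀ ≤ m)
    (hV : μ {x | u x ≤ m + 1} ≠ ∞) {T : ℝ} (hT : m + 1 ≤ T) :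
    (μ.map u).restrict (Ioi T) ≤ (volume.restrict (Ioi T)).withDensity fun t => ENNReal.ofReal
      ((μ {x | u x ≤ m + 1}).toReal * finrank ℝ E * (t - m) ^ (finrank ℝ E - 1)) := by
  rw [← StieltjesFunction.measure_truncPow ENNReal.toReal_nonneg (by linarith : m ≤ T)]
  refine StieltjesFunction.le_measure_of_forall_Ioc_le _ fun a b => ?_
  rw [Measure.restrict_apply measurableSet_Ioc, Ioc_inter_Ioi_eq_Ioc_max,
    Measure.map_apply hu.continuous.measurable measurableSet_Ioc]
  rcases le_total (max a T) (max b T) with hab | hba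
  · refine (hu.measure_preimage_Ioc_le μ hx₀ hV (hT.trans (le_max_right a T)) hab).trans_eq ?_
    simp only [StieltjesFunction.truncPow, mul_sub]
  · rw [Ioc_eq_empty (not_lt.2 hba), preimage_empty, measure_empty]
    exact zero_le

theorem ConvexOn.integrable_comp_of_tendsto_cocompact (hu : ConvexOn ℝ univ u)
    (hcoer : Tendsto u (cocompact E) atTop) {ζ : ℝ → ℝ} (hζ : Continuous ζ)
    (hmom : IntegrableOn (fun t => t ^ (finrank ℝ E - 1) * ζ t) (Ioi 0)) :
    Integrable (fun x => ζ (u x)) μ := by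
  set m := u 0
  set T := |m| + 1
  have hT : m + 1 ≤ T := by linarith [le_abs_self m]
  have hV : μ {x | u x ≤ m + 1} ≠ ∞ :=
    (isCompact_setOf_le_of_tendsto_cocompact hu.continuous hcoer _).measure_lt_top.ne
  have htail : IntegrableOn (fun x => ζ (u x)) (u ⁻¹' Ioi T) μ := by
    refine ⟨(hζ.comp hu.continuous).aestronglyMeasurable, ?_⟩
    rw [hasFiniteIntegral_iff_enorm]
    calc ∫⁻ x in u ⁻¹' Ioi T, ‖ζ (u x)‖ₑ ∂μ = ∫⁻ t in Ioi T, ‖ζ t‖ₑ ∂μ.map u :=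
          (setLIntegral_map measurableSet_Ioi hζ.measurable.enorm hu.continuous.measurable).symm
      _ ≤ ∫⁻ t, ‖ζ t‖ₑ ∂(volume.restrict (Ioi T)).withDensity fun t =>
            ENNReal.ofReal ((μ {x | u x ≤ m + 1}).toReal * finrank ℝ E *
              (t - m) ^ (finrank ℝ E - 1)) :=
          lintegral_mono' (hu.map_restrict_Ioi_le_withDensity μ le_rfl hV hT) le_rfl
      _ < ∞ := by
          rw [lintegral_withDensity_eq_lintegral_mul _ (by fun_prop) hζ.measurable.enorm]
          exact setLIntegral_Ioi_ofReal_mul_sub_pow_mul_enorm_lt_top hmom (by positivity) m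
  rw [← integrableOn_univ, ← preimage_univ (f := u), ← Iic_union_Ioi (a := T), preimage_union]
  exact ((hζ.comp hu.continuous).continuousOn.integrableOn_compact
    (isCompact_setOf_le_of_tendsto_cocompact hu.continuous hcoer T)).union htail

end ConvexSublevel

theorem integral_comp_add_integral_comp_eq_max_min {α : Type*} [MeasurableSpace α]
    {μ : Measure α} (ζ : ℝ → ℝ) {u v : α → ℝ} (hu : Integrable (fun x => ζ (u x)) μ)
    (hv : Integrable (fun x => ζ (v x)) μ) (hmax : Integrable (fun x => ζ (max (u x) (v x))) μ)
    (hmin : Integrable (fun x => ζ (min (u x) (v x))) μ) :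
    (∫ x, ζ (u x) ∂μ) + ∫ x, ζ (v x) ∂μ =
      (∫ x, ζ (max (u x) (v x)) ∂μ) + ∫ x, ζ (min (u x) (v x)) ∂μ := by
  rw [← integral_add hu hv, ← integral_add hmax hmin]
  congr 1 with x
  rcases le_total (u x) (v x) with h | h
  · rw [max_eq_right h, min_eq_left h, add_comm]
  · rw [max_eq_left h, min_eq_right h]

theorem stmt16_general (n : ℕ) (ζ : ℝ → ℝ) (hζc : Continuous ζ)
    (hmom : IntegrableOn (fun t : ℝ => t ^ (n - 1) * ζ t) (Set.Ioi 0)) :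
    (∀ u : EuclideanSpace ℝ (Fin n) → ℝ, ConvexOn ℝ Set.univ u →
      Tendsto u (cocompact (EuclideanSpace ℝ (Fin n))) atTop →
      Integrable (fun x => ζ (u x))) ∧
    (∀ u v : EuclideanSpace ℝ (Fin n) → ℝ,
      ConvexOn ℝ Set.univ u → Tendsto u (cocompact (EuclideanSpace ℝ (Fin n))) atTop →
      ConvexOn ℝ Set.univ v → Tendsto v (cocompact (EuclideanSpace ℝ (Fin n))) atTop →
      ConvexOn ℝ Set.univ (fun x => min (u x) (v x)) →
      Tendsto (fun x => min (u x) (v x)) (cocompact (EuclideanSpace ℝ (Fin n))) atTop →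
      (∫ x, ζ (u x)) + (∫ x, ζ (v x)) =
        (∫ x, ζ (max (u x) (v x))) + ∫ x, ζ (min (u x) (v x))) := by
  have hint (u : EuclideanSpace ℝ (Fin n) → ℝ) (hu : ConvexOn ℝ univ u)
      (hcoer : Tendsto u (cocompact _) atTop) : Integrable (fun x => ζ (u x)) :=
    hu.integrable_comp_of_tendsto_cocompact volume hcoer hζc (by rwa [finrank_euclideanSpace_fin])
  refine ⟨hint, fun u v hu hucoer hv hvcoer hmin hmincoer => ?_⟩
  exact integral_comp_add_integral_comp_eq_max_min ζ (hint u hu hucoer) (hint v hv hvcoer)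
    (hint _ (hu.sup hv) (tendsto_atTop_mono (fun x => le_max_left _ _) hucoer))
    (hint _ hmin hmincoer)

/-- If `ζ : ℝ → [0,∞)` is continuous with
`∫₀^∞ t^(n−1) ζ(t) dt < ∞`, then `∫ ζ(u(x)) dx` is finite for every convex
coercive `u : ℝⁿ → ℝ`, and `u ↦ ∫ ζ(u(x)) dx` satisfies the valuation property. -/
theorem stmt16 (n : ℕ) (hn : 1 ≤ n) (ζ : ℝ → ℝ) (hζc : Continuous ζ) (hζ0 : ∀ t, 0 ≤ ζ t)
    (hmom : IntegrableOn (fun t : ℝ => t ^ (n - 1) * ζ t) (Set.Ioi 0)) :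
    (∀ u : EuclideanSpace ℝ (Fin n) → ℝ, ConvexOn ℝ Set.univ u →
      Tendsto u (cocompact (EuclideanSpace ℝ (Fin n))) atTop →
      Integrable (fun x => ζ (u x))) ∧
    (∀ u v : EuclideanSpace ℝ (Fin n) → ℝ,
      ConvexOn ℝ Set.univ u → Tendsto u (cocompact (EuclideanSpace ℝ (Fin n))) atTop →
      ConvexOn ℝ Set.univ v → Tendsto v (cocompact (EuclideanSpace ℝ (Fin n))) atTop →
      ConvexOn ℝ Set.univ (fun x => min (u x) (v x)) →
      Tendsto (fun x => min (u x) (v x)) (cocompact (EuclideanSpace ℝ (Fin n))) atTop →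
      (∫ x, ζ (u x)) + (∫ x, ζ (v x)) =
        (∫ x, ζ (max (u x) (v x))) + ∫ x, ζ (min (u x) (v x))) :=
  stmt16_general n ζ hζc hmom
end
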